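/- arXiv:2009.02487 — 2 statements merged into one kernel-verified Lean document; each statement's English description precedes it below -/
import Mathlib

section
/- Assume for each reaction q the supports of the dissociation row D_q and the kinetic order row F_q coincide, and each Hill-type rate function factors as K_q(x) = k_q ∏_i x_i^{F_{qi}}/(d_{qi} + x_i^{F_{qi}}) with factors equal to 1 whenever F_{qi} = 0. If two reactions q, q' satisfy M_q(x)/T_q(x) = M_{q'}(x)/T_{q'}(x) for all positive x (equal interaction functions), then F_q = F_{q'} and D_q = D_{q'}. In other words, HT-RDK = HT-RDKD under the support condition. -/
open Filter Real Topology

lemma hill_one_factor {f d : ℝ} (hd : 0 ≤ d)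
    (h1 : ∀ t : ℝ, 0 < t → (d + 1) * (t ^ f / (d + t ^ f)) = 1)
    (hs : d = 0 ↔ f = 0) : f = 0 ∧ d = 0 := by
  have h2 := h1 2 (by norm_num)
  have hp : (0:ℝ) < (2:ℝ) ^ f := Real.rpow_pos_of_pos (by norm_num) f
  have hden : (0:ℝ) < d + 2 ^ f := by linarith
  have h3 : d * (2:ℝ) ^ f = d := by
    field_simp at h2
    nlinarith [h2]
  rcases eq_or_lt_of_le hd with hd0 | hdpos
  · have : f = 0 := hs.mp hd0.symm
    exact ⟨this, hd0.symm⟩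
  · have h4 : (2:ℝ) ^ f = 1 := by
      have h5 : d * (2:ℝ) ^ f = d * 1 := by rw [mul_one]; exact h3
      exact mul_left_cancel₀ (ne_of_gt hdpos) h5
    have : f * Real.log 2 = 0 := by
      have := congrArg Real.log h4
      rwa [Real.log_rpow (by norm_num), Real.log_one] at this
    have hf0 : f = 0 := by
      have hl2 : Real.log 2 ≠ 0 := Real.log_ne_zero_of_pos_of_ne_one (by norm_num) (by norm_num)
      exact (mul_eq_zero.mp this).resolve_right hl2
    exact absurd (hs.mpr hf0) (ne_of_gt hdpos)

lemma hill_key {f f' d d' : ℝ} (hf : 0 ≤ f) (hf' : 0 ≤ f') (hd : 0 ≤ d) (hd' : 0 ≤ d')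
    (hs : d = 0 ↔ f = 0) (hs' : d' = 0 ↔ f' = 0)
    (h : ∀ t : ℝ, 0 < t →
      (d + 1) * (t ^ f / (d + t ^ f)) = (d' + 1) * (t ^ f' / (d' + t ^ f'))) :
    f = f' ∧ d = d' := by
  rcases eq_or_lt_of_le hf with hf0 | hfpos
  · -- f = 0, d = 0, LHS ≡ 1
    have hd0 : d = 0 := hs.mpr hf0.symm
    have h1 : ∀ t : ℝ, 0 < t → (d' + 1) * (t ^ f' / (d' + t ^ f')) = 1 := by
      intro t ht
      have := (h t ht).symm
      rw [← hf0, hd0] at this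
      rw [this, Real.rpow_zero]; norm_num
    obtain ⟨hf'0, hd'0⟩ := hill_one_factor hd' h1 hs'
    exact ⟨by rw [← hf0, hf'0], by rw [hd0, hd'0]⟩
  rcases eq_or_lt_of_le hf' with hf'0 | hf'pos
  · have hd'0 : d' = 0 := hs'.mpr hf'0.symm
    have h1 : ∀ t : ℝ, 0 < t → (d + 1) * (t ^ f / (d + t ^ f)) = 1 := by
      intro t ht
      have := h t ht
      rw [← hf'0, hd'0] at this
      rw [this, Real.rpow_zero]; norm_num
    obtain ⟨hf0, hd0⟩ := hill_one_factor hd h1 hs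
    exact ⟨by rw [hf0, ← hf'0], by rw [hd0, hd'0]⟩
  -- now f > 0, f' > 0, hence d > 0, d' > 0
  have hdpos : 0 < d := lt_of_le_of_ne hd fun h0 => hfpos.ne' (hs.mp h0.symm)
  have hd'pos : 0 < d' := lt_of_le_of_ne hd' fun h0 => hf'pos.ne' (hs'.mp h0.symm)
  have key : ∀ t : ℝ, 0 < t →
      (d + 1) * t ^ f * (d' + t ^ f') = (d' + 1) * t ^ f' * (d + t ^ f) := by
    intro t ht
    have h1 := h t ht
    have ha : (0:ℝ) < t ^ f := Real.rpow_pos_of_pos ht f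
    have hb : (0:ℝ) < t ^ f' := Real.rpow_pos_of_pos ht f'
    have hA : d + t ^ f ≠ 0 := by positivity
    have hB : d' + t ^ f' ≠ 0 := by positivity
    field_simp at h1
    nlinarith [h1]
  -- limit argument to get d = d'
  have hE : ∀ᶠ t : ℝ in atTop,
      (d - d') + (d + 1) * d' * (t ^ f')⁻¹ - (d' + 1) * d * (t ^ f)⁻¹ = 0 := by
    filter_upwards [eventually_gt_atTop (0:ℝ)] with t ht
    have k := key t ht
    have ha : (0:ℝ) < t ^ f := Real.rpow_pos_of_pos ht f
    have hb : (0:ℝ) < t ^ f' := Real.rpow_pos_of_pos ht f'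
    field_simp
    nlinarith [k]
  have l1 : Tendsto (fun t : ℝ => (t ^ f)⁻¹) atTop (𝓝 0) :=
    (tendsto_rpow_atTop hfpos).inv_tendsto_atTop
  have l2 : Tendsto (fun t : ℝ => (t ^ f')⁻¹) atTop (𝓝 0) :=
    (tendsto_rpow_atTop hf'pos).inv_tendsto_atTop
  have lE : Tendsto (fun t : ℝ =>
      (d - d') + (d + 1) * d' * (t ^ f')⁻¹ - (d' + 1) * d * (t ^ f)⁻¹) atTop
      (𝓝 ((d - d') + (d + 1) * d' * 0 - (d' + 1) * d * 0)) :=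
    (tendsto_const_nhds.add (l2.const_mul _)).sub (l1.const_mul _)
  have lE0 : Tendsto (fun t : ℝ =>
      (d - d') + (d + 1) * d' * (t ^ f')⁻¹ - (d' + 1) * d * (t ^ f)⁻¹) atTop (𝓝 0) :=
    Tendsto.congr' (EventuallyEq.symm hE) tendsto_const_nhds
  have hdd : d = d' := by
    have := tendsto_nhds_unique lE lE0
    simp at this
    linarith
  subst hdd
  -- now exponents
  have k2 := key 2 (by norm_num)
  have ha : (0:ℝ) < (2:ℝ) ^ f := Real.rpow_pos_of_pos (by norm_num) f
  have hb : (0:ℝ) < (2:ℝ) ^ f' := Real.rpow_pos_of_pos (by norm_num) f'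
  have h22 : (2:ℝ) ^ f = 2 ^ f' := by
    have hz : (d + 1) * d * ((2:ℝ) ^ f - 2 ^ f') = 0 := by linear_combination k2
    have hp : (0:ℝ) < (d + 1) * d := by positivity
    have := (mul_eq_zero.mp hz).resolve_left (ne_of_gt hp)
    linarith
  have : f * Real.log 2 = f' * Real.log 2 := by
    have := congrArg Real.log h22
    rwa [Real.log_rpow (by norm_num), Real.log_rpow (by norm_num)] at this
  have hl2 : Real.log 2 ≠ 0 := Real.log_ne_zero_of_pos_of_ne_one (by norm_num) (by norm_num)
  exact ⟨mul_right_cancel₀ hl2 this, rfl⟩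

lemma hill_prod_ite {m : ℕ} (G E : Fin m → ℝ) (j : Fin m) (t : ℝ) :
    (∏ i, (if i = j then t else 1) ^ (G i) / (E i + (if i = j then t else 1) ^ (G i)))
      = (t ^ G j / (E j + t ^ G j)) * ∏ i ∈ Finset.univ.erase j, 1 / (E i + 1) := by
  rw [← Finset.mul_prod_erase Finset.univ
    (fun i => (if i = j then t else 1) ^ (G i) / (E i + (if i = j then t else 1) ^ (G i)))
    (Finset.mem_univ j)]
  congr 1
  · simp
  · apply Finset.prod_congr rfl
    intro i hi
    have hij : i ≠ j := Finset.ne_of_mem_erase hi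
    simp [hij, Real.one_rpow]

lemma hill_alg {A B p p' c c' : ℝ} (hp : 0 < p) (hc : 0 < c) (hc' : 0 < c')
    (h1 : A * p = B * p') (h2 : (1 / c) * p = (1 / c') * p') : c * A = c' * B := by
  have h3 : p' * c = p * c' := by
    field_simp at h2
    linarith
  have h4 : (c * A) * p = (c' * B) * p := by linear_combination c * h1 + B * h3
  exact mul_right_cancel₀ (ne_of_gt hp) h4

/-- Proposition 3.11 (HT-RDK = HT-RDKD under the support condition): if two
Hill-type interaction functions, with nonnegative kinetic order rows `F, F'`
and dissociation rows `D, D'` satisfying `supp D = supp F` and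
`supp D' = supp F'`, agree on the positive orthant, then `F = F'` and
`D = D'`. -/
theorem htrdk_eq_htrdkd
    (m : ℕ) (F F' D D' : Fin m → ℝ)
    (hF : ∀ i, 0 ≤ F i) (hF' : ∀ i, 0 ≤ F' i)
    (hD : ∀ i, 0 ≤ D i) (hD' : ∀ i, 0 ≤ D' i)
    (hsupp : ∀ i, D i = 0 ↔ F i = 0)
    (hsupp' : ∀ i, D' i = 0 ↔ F' i = 0)
    (heq : ∀ x : Fin m → ℝ, (∀ i, 0 < x i) →
      (∏ i, (x i) ^ (F i) / (D i + (x i) ^ (F i))) =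
        ∏ i, (x i) ^ (F' i) / (D' i + (x i) ^ (F' i))) :
    F = F' ∧ D = D' := by
  have main : ∀ j, F j = F' j ∧ D j = D' j := by
    intro j
    set p : ℝ := ∏ i ∈ Finset.univ.erase j, 1 / (D i + 1) with hpdef
    set p' : ℝ := ∏ i ∈ Finset.univ.erase j, 1 / (D' i + 1) with hp'def
    have hppos : 0 < p := Finset.prod_pos (fun i _ => by have := hD i; positivity)
    have hp'pos : 0 < p' := Finset.prod_pos (fun i _ => by have := hD' i; positivity)
    have hones := heq (fun _ => 1) (fun _ => one_pos)
    simp only [Real.one_rpow] at hones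
    have hones' : (1 / (D j + 1)) * p = (1 / (D' j + 1)) * p' := by
      rw [hpdef, hp'def,
        Finset.mul_prod_erase Finset.univ (fun i => 1 / (D i + 1)) (Finset.mem_univ j),
        Finset.mul_prod_erase Finset.univ (fun i => 1 / (D' i + 1)) (Finset.mem_univ j)]
      exact hones
    have h : ∀ t : ℝ, 0 < t →
        (D j + 1) * (t ^ F j / (D j + t ^ F j)) =
          (D' j + 1) * (t ^ F' j / (D' j + t ^ F' j)) := by
      intro t ht
      have hx : ∀ i, 0 < (fun i => if i = j then t else 1) i := by
        intro i
        dsimp only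
        split_ifs
        · exact ht
        · exact one_pos
      have e1 := heq (fun i => if i = j then t else 1) hx
      rw [hill_prod_ite F D j t, hill_prod_ite F' D' j t] at e1
      have hc : 0 < D j + 1 := by have := hD j; linarith
      have hc' : 0 < D' j + 1 := by have := hD' j; linarith
      exact hill_alg hppos hc hc' e1 hones'
    exact hill_key (hF j) (hF' j) (hD j) (hD' j) (hsupp j) (hsupp' j) h
  exact ⟨funext fun j => (main j).1, funext fun j => (main j).2⟩
end

section
/- Consider the one-species case: for positive integers or reals f, f' ≥ 0 and d, d' ≥ 0 with (d = 0 ↔ f = 0) and (d' = 0 ↔ f' = 0), if x^f/(d + x^f) = x^{f'}/(d' + x^{f'}) for all x > 0, then f = f' and d = d'. -/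
/-! Clearing denominators turns the identity of Hill functions into `d' x^f = d x^f'` for all
`x > 0`. At `x = 1` this gives `d = d'`. If `f = 0` the normalization forces `d = d' = 0` and
then `f' = 0`; otherwise `d ≠ 0` can be cancelled, and `2^f = 2^f'` gives `f = f'`. -/

theorem div_add_self_eq_div_add_self_iff {K : Type*} [Field K] {a b d d' : K}
    (ha : d + a ≠ 0) (hb : d' + b ≠ 0) :
    a / (d + a) = b / (d' + b) ↔ d' * a = d * b := by
  rw [div_eq_div_iff ha hb]
  constructor <;> intro h <;> linear_combination h

theorem hill_cross_mul_eq {f f' d d' : ℝ} (hd : 0 ≤ d) (hd' : 0 ≤ d')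
    {x : ℝ} (hx : 0 < x) (heq : x ^ f / (d + x ^ f) = x ^ f' / (d' + x ^ f')) :
    d' * x ^ f = d * x ^ f' :=
  (div_add_self_eq_div_add_self_iff (by positivity) (by positivity)).mp heq

theorem one_species_hill_determined_general
    (f f' d d' : ℝ) (hd : 0 ≤ d) (hd' : 0 ≤ d')
    (hsupp : d = 0 ↔ f = 0) (hsupp' : d' = 0 ↔ f' = 0)
    (heq : ∀ x : ℝ, 0 < x → x ^ f / (d + x ^ f) = x ^ f' / (d' + x ^ f')) :
    f = f' ∧ d = d' := by
  have cross : ∀ x : ℝ, 0 < x → d' * x ^ f = d * x ^ f' :=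
    fun x hx => hill_cross_mul_eq hd hd' hx (heq x hx)
  have hdd : d = d' := by simpa using (cross 1 one_pos).symm
  refine ⟨?_, hdd⟩
  by_cases hf0 : f = 0
  · rw [hf0, eq_comm, ← hsupp', ← hdd, hsupp]
    exact hf0
  · have hd0 : d ≠ 0 := mt hsupp.mp hf0
    have hpow : (2 : ℝ) ^ f = 2 ^ f' := mul_left_cancel₀ hd0 (hdd ▸ cross 2 two_pos)
    exact (Real.rpow_right_inj two_pos (by norm_num)).mp hpow

/-- Single-species core of Proposition 3.11: equality of one-dimensional Hill
functions on the positive reals forces equality of exponents and dissociation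
constants, under the normalization `d = 0 ↔ f = 0`. -/
theorem one_species_hill_determined
    (f f' d d' : ℝ) (hf : 0 ≤ f) (hf' : 0 ≤ f') (hd : 0 ≤ d) (hd' : 0 ≤ d')
    (hsupp : d = 0 ↔ f = 0) (hsupp' : d' = 0 ↔ f' = 0)
    (heq : ∀ x : ℝ, 0 < x → x ^ f / (d + x ^ f) = x ^ f' / (d' + x ^ f')) :
    f = f' ∧ d = d' :=
  one_species_hill_determined_general f f' d d' hd hd' hsupp hsupp' heq
end
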